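/- Let G be a linearly ordered abelian group, H ⊆ H' convex subgroups of G, and m ≥ 1 an integer. Then H + mH' = (H + mG) ∩ H'. -/

import Mathlib

/-!
Since `H ≤ H'`, the modular law in the subgroup lattice of an abelian group gives
`(H + mG) ∩ H' = H + (mG ∩ H')`, and `mG ∩ H' = mH'` because convexity of `H'` together with
`|g| ≤ |m • g|` forces `g ∈ H'` whenever `m • g ∈ H'`.
-/

/-- `mK = {m • k : k ∈ K}` as a subgroup. -/
def smulSub {G : Type*} [AddCommGroup G] (m : ℕ) (K : AddSubgroup G) : AddSubgroup G :=
  AddSubgroup.map (m • AddMonoidHom.id G) K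

/-- A subgroup `H` of a linearly ordered abelian group is convex if
`0 ≤ g ≤ h` and `h ∈ H` imply `g ∈ H`. -/
def IsConvexSubgroup {G : Type*} [AddCommGroup G] [LinearOrder G] [IsOrderedAddMonoid G] (H : AddSubgroup G) : Prop :=
  ∀ g h : G, 0 ≤ g → g ≤ h → h ∈ H → g ∈ H

section

variable {G : Type*} [AddCommGroup G]

@[simp]
lemma mem_smulSub {m : ℕ} {K : AddSubgroup G} {x : G} :
    x ∈ smulSub m K ↔ ∃ k ∈ K, m • k = x := by
  simp [smulSub]

lemma smulSub_le_self (m : ℕ) (K : AddSubgroup G) : smulSub m K ≤ K := by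
  rintro _ ⟨k, hk, rfl⟩
  exact K.nsmul_mem hk m

lemma smulSub_mono (m : ℕ) : Monotone (smulSub (G := G) m) :=
  fun _ _ hKL => AddSubgroup.map_mono hKL

variable [LinearOrder G] [IsOrderedAddMonoid G] {H : AddSubgroup G} {m : ℕ}

lemma IsConvexSubgroup.mem_of_nsmul_mem (hH : IsConvexSubgroup H) (hm : 1 ≤ m) {g : G}
    (h : m • g ∈ H) : g ∈ H := by
  rw [← abs_mem_iff] at h ⊢
  refine hH |g| |m • g| (abs_nonneg g) ?_ h
  rw [abs_nsmul]
  simpa using nsmul_le_nsmul_left (abs_nonneg g) hm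

lemma IsConvexSubgroup.smulSub_top_inf (hH : IsConvexSubgroup H) (hm : 1 ≤ m) :
    smulSub m ⊤ ⊓ H = smulSub m H := by
  refine le_antisymm ?_ (le_inf (smulSub_mono m le_top) (smulSub_le_self m H))
  rintro _ ⟨hx, hxH⟩
  obtain ⟨g, -, rfl⟩ := mem_smulSub.1 hx
  exact mem_smulSub.2 ⟨g, hH.mem_of_nsmul_mem hm hxH, rfl⟩

end

theorem sup_smul_eq_sup_top_inf_general {G : Type*} [AddCommGroup G] [LinearOrder G] [IsOrderedAddMonoid G]
    (H H' : AddSubgroup G) (hH' : IsConvexSubgroup H')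
    (hle : H ≤ H') (m : ℕ) (hm : 1 ≤ m) :
    H ⊔ smulSub m H' = (H ⊔ smulSub m ⊤) ⊓ H' := by
  rw [sup_inf_assoc_of_le _ hle, hH'.smulSub_top_inf hm]

/-- For convex subgroups `H ⊆ H'` of a linearly ordered abelian group and `m ≥ 1`,
`H + mH' = (H + mG) ∩ H'`. -/
theorem sup_smul_eq_sup_top_inf {G : Type*} [AddCommGroup G] [LinearOrder G] [IsOrderedAddMonoid G]
    (H H' : AddSubgroup G) (hH : IsConvexSubgroup H) (hH' : IsConvexSubgroup H')
    (hle : H ≤ H') (m : ℕ) (hm : 1 ≤ m) :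
    H ⊔ smulSub m H' = (H ⊔ smulSub m ⊤) ⊓ H' :=
  sup_smul_eq_sup_top_inf_general H H' hH' hle m hm
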